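/- For a 4×4 matrix a of rank at most 2, and any pair i₁ < i₂, the product of a with the 4×4 matrix built from the 2×2 minors M_{i₁i₂}^{jk} of a (arranged as: column 1 = (M^{23}, -M^{13}, M^{12}, 0)ᵀ, column 2 = (M^{24}, -M^{14}, 0, M^{12})ᵀ, column 3 = (M^{34}, 0, -M^{14}, M^{13})ᵀ, column 4 = (0, M^{34}, -M^{24}, M^{23})ᵀ) is the zero matrix. -/

import Mathlib

open Matrix

/-!
Column `j` of the cofactor matrix carries the 2×2 minors of rows `i₁, i₂` on the three columns
other than `3 - j`, with alternating signs, so entry `(i, j)` of the product is the Laplace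
expansion along its first row of the 3×3 minor of `a` on rows `i, i₁, i₂` and those three
columns. All 3×3 minors vanish because `a` has rank at most 2.
-/

/-- The 2×2 minor of `a` on rows `r.1 < r.2` and columns `c.1 < c.2`. -/
def minor2 {K : Type*} [CommRing K] (a : Matrix (Fin 4) (Fin 4) K)
    (r c : Fin 4 × Fin 4) : K :=
  (a.submatrix ![r.1, r.2] ![c.1, c.2]).det

theorem Matrix.det_submatrix_eq_zero_of_rank_lt {R k m n : Type*} [CommRing R] [IsDomain R]
    [Fintype k] [DecidableEq k] [Fintype n] (A : Matrix m n R) (r : k → m) (c : k → n)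
    (h : A.rank < Fintype.card k) : (A.submatrix r c).det = 0 := by
  by_contra hdet
  have := (A.rank_submatrix_le r c).trans_lt h
  rw [rank_of_det_ne_zero hdet] at this
  exact this.false

theorem det_submatrix_fin_three_eq_minor2 {K : Type*} [CommRing K]
    (a : Matrix (Fin 4) (Fin 4) K) (i : Fin 4) (r : Fin 4 × Fin 4) (c₁ c₂ c₃ : Fin 4) :
    (a.submatrix ![i, r.1, r.2] ![c₁, c₂, c₃]).det =
      a i c₁ * minor2 a r (c₂, c₃) - a i c₂ * minor2 a r (c₁, c₃)
        + a i c₃ * minor2 a r (c₁, c₂) := by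
  simp only [det_fin_three, minor2, det_fin_two, submatrix_apply, cons_val_zero, cons_val_one,
    cons_val, cons_val_fin_one]
  ring

theorem rank_le_two_mul_cofactor2_general {K : Type*} [Field K]
    (a : Matrix (Fin 4) (Fin 4) K) (h : a.rank ≤ 2)
    (i₁ i₂ : Fin 4) :
    a * !![minor2 a (i₁, i₂) (1, 2), minor2 a (i₁, i₂) (1, 3),
             minor2 a (i₁, i₂) (2, 3), 0;
           -minor2 a (i₁, i₂) (0, 2), -minor2 a (i₁, i₂) (0, 3),
             0, minor2 a (i₁, i₂) (2, 3);
           minor2 a (i₁, i₂) (0, 1), 0,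
             -minor2 a (i₁, i₂) (0, 3), -minor2 a (i₁, i₂) (1, 3);
           0, minor2 a (i₁, i₂) (0, 1),
             minor2 a (i₁, i₂) (0, 2), minor2 a (i₁, i₂) (1, 2)] = 0 := by
  ext i j
  have minor3_eq_zero (c₁ c₂ c₃ : Fin 4) :
      a i c₁ * minor2 a (i₁, i₂) (c₂, c₃) - a i c₂ * minor2 a (i₁, i₂) (c₁, c₃)
        + a i c₃ * minor2 a (i₁, i₂) (c₁, c₂) = 0 := by
    rw [← det_submatrix_fin_three_eq_minor2]
    exact a.det_submatrix_eq_zero_of_rank_lt _ _ (by simpa using h.trans_lt (by norm_num))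
  fin_cases j <;> simp [mul_apply, Fin.sum_univ_four]
  · linear_combination minor3_eq_zero 0 1 2
  · linear_combination minor3_eq_zero 0 1 3
  · linear_combination minor3_eq_zero 0 2 3
  · linear_combination minor3_eq_zero 1 2 3

/-- If a 4×4 matrix `a` has rank at most 2, then for any rows i₁ < i₂ the product
of `a` with the matrix of order-2 cofactors based on (i₁,i₂) vanishes.
(Column indices in the minors `M^{jk}` below are 1-based, as in the paper.) -/
theorem rank_le_two_mul_cofactor2 {K : Type*} [Field K]
    (a : Matrix (Fin 4) (Fin 4) K) (h : a.rank ≤ 2)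
    (i₁ i₂ : Fin 4) (hi : i₁ < i₂) :
    a * !![minor2 a (i₁, i₂) (1, 2), minor2 a (i₁, i₂) (1, 3),
             minor2 a (i₁, i₂) (2, 3), 0;
           -minor2 a (i₁, i₂) (0, 2), -minor2 a (i₁, i₂) (0, 3),
             0, minor2 a (i₁, i₂) (2, 3);
           minor2 a (i₁, i₂) (0, 1), 0,
             -minor2 a (i₁, i₂) (0, 3), -minor2 a (i₁, i₂) (1, 3);
           0, minor2 a (i₁, i₂) (0, 1),
             minor2 a (i₁, i₂) (0, 2), minor2 a (i₁, i₂) (1, 2)] = 0 :=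
  rank_le_two_mul_cofactor2_general a h i₁ i₂
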